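/- Let G be a finite simple graph with at least three vertices, and let e = {s, t} be an edge of G. Let G' be the graph obtained from G by deleting the edge e and adding two new vertices s' and t' together with the two new edges {s, s'} and {t, t'}. Then G has a Hamiltonian cycle containing the edge e if and only if G' has a Hamiltonian path from s' to t'. -/

import Mathlib

/-!
A Hamiltonian cycle through the edge `st` is the same thing as a Hamiltonian `s`–`t` path in
`G - st`: close the path with `st`, or cut the cycle open there. In `G'` the new vertices `s'`
and `t'` are pendant at `s` and `t`, so a Hamiltonian `s'`–`t'` path is exactly such a path with
the two pendant edges attached.
-/

/-- The graph `G'` obtained from `G` by deleting the edge `{s, t}` and adding two new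
vertices `s' = Sum.inr 0` and `t' = Sum.inr 1` together with the new edges `{s, s'}` and
`{t, t'}`. -/
def ExtGraph {V : Type*} (G : SimpleGraph V) (s t : V) : SimpleGraph (V ⊕ Fin 2) :=
  SimpleGraph.fromRel (fun x y =>
    (∃ u v : V, x = Sum.inl u ∧ y = Sum.inl v ∧ G.Adj u v ∧
      ¬(u = s ∧ v = t) ∧ ¬(u = t ∧ v = s)) ∨
    (x = Sum.inl s ∧ y = Sum.inr 0) ∨ (x = Sum.inl t ∧ y = Sum.inr 1))

namespace SimpleGraph

variable {V W : Type*} {G : SimpleGraph V} {u v : V}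

namespace Walk

lemma IsPath.exists_eq_cons_of_mem_edges {w : V} {p : G.Walk u w} (hp : p.IsPath)
    (he : s(u, v) ∈ p.edges) : ∃ (h : G.Adj u v) (q : G.Walk v w), p = cons h q := by
  cases p with
  | nil => simp at he
  | cons h q =>
    rw [edges_cons, List.mem_cons] at he
    rcases he with he | he
    · obtain rfl : v = _ := by simpa [Sym2.eq_iff, h.ne] using he
      exact ⟨h, q, rfl⟩
    · exact absurd (q.fst_mem_support_of_mem_edges he) (cons_isPath_iff h q |>.1 hp).2

lemma exists_support_map_eq_of_mem_range {H : SimpleGraph W} (f : G ↪g H) {x y : W}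
    (p : H.Walk x y) {a b : V} (ha : f a = x) (hb : f b = y)
    (hp : ∀ z ∈ p.support, z ∈ Set.range f) :
    ∃ q : G.Walk a b, q.support.map f = p.support := by
  induction p generalizing a with
  | nil =>
    obtain rfl : a = b := f.injective (ha.trans hb.symm)
    exact ⟨nil, by simp [ha]⟩
  | cons h p ih =>
    obtain ⟨c, rfl⟩ := hp _ (List.mem_cons_of_mem _ p.start_mem_support)
    obtain ⟨q, hq⟩ := ih rfl hb fun z hz ↦ hp z (List.mem_cons_of_mem _ hz)
    exact ⟨cons (f.map_adj_iff.1 (ha ▸ h)) q, by simp [hq, ha]⟩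

end Walk

variable [DecidableEq V]

namespace Walk

lemma IsHamiltonianCycle.reverse {c : G.Walk u u} (hc : c.IsHamiltonianCycle) :
    c.reverse.IsHamiltonianCycle := by
  have := hc.finite
  cases nonempty_fintype V
  rw [isHamiltonianCycle_iff_isCycle_and_length_eq] at hc ⊢
  exact ⟨hc.1.reverse, by rw [length_reverse, hc.2]⟩

lemma cons_isHamiltonianCycle_iff (h : G.Adj u v) (p : G.Walk v u) :
    (cons h p).IsHamiltonianCycle ↔ p.IsHamiltonian ∧ s(u, v) ∉ p.edges := by
  rw [isHamiltonianCycle_iff_isCycle_and_support_count_tail_eq_one, cons_isCycle_iff,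
    support_cons, List.tail_cons]
  exact ⟨fun ⟨⟨_, he⟩, hp⟩ ↦ ⟨hp, he⟩,
    fun ⟨hp, he⟩ ↦ ⟨⟨hp.isPath, he⟩, hp⟩⟩

lemma IsHamiltonianCycle.exists_isHamiltonian_of_mem_edges {c : G.Walk u u}
    (hc : c.IsHamiltonianCycle) (he : s(u, v) ∈ c.edges) :
    ∃ p : G.Walk v u, p.IsHamiltonian ∧ s(u, v) ∉ p.edges := by
  cases c with
  | nil => simp at he
  | @cons _ w _ h q =>
    by_cases hw : w = v
    · subst hw
      exact ⟨q, (cons_isHamiltonianCycle_iff h q).1 hc⟩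
    · -- the cycle does not leave `u` along `uv`, so it returns to `u` along it: reverse it
      have hq : s(u, v) ∈ q.reverse.edges := by
        simpa [Sym2.eq_iff, Ne.symm hw, h.ne] using he
      obtain ⟨h', r, hr⟩ :=
        ((cons_isHamiltonianCycle_iff h q).1 hc).1.isPath.reverse.exists_eq_cons_of_mem_edges hq
      have hrev : (cons h q).reverse = cons h' (r.concat h.symm) := by
        rw [reverse_cons, hr, cons_append, ← concat_eq_append]
      exact ⟨_, (cons_isHamiltonianCycle_iff h' _).1 (hrev ▸ hc.reverse)⟩

end Walk

theorem exists_isHamiltonianCycle_mem_edges_iff (h : G.Adj u v) :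
    (∃ (w : V) (c : G.Walk w w), c.IsHamiltonianCycle ∧ s(u, v) ∈ c.edges) ↔
      ∃ p : (G.deleteEdges {s(u, v)}).Walk u v, p.IsHamiltonian := by
  constructor
  · rintro ⟨w, c, hc, he⟩
    have hv := hc.mem_support v
    obtain ⟨p, hp, hpe⟩ := (hc.rotate hv).exists_isHamiltonian_of_mem_edges (v := u)
      (by rw [(c.rotate_edges v hv).mem_iff, Sym2.eq_swap]; exact he)
    exact ⟨p.toDeleteEdge _ (Sym2.eq_swap ▸ hpe), by simpa [Walk.IsHamiltonian] using hp⟩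
  · rintro ⟨p, hp⟩
    refine ⟨v, .cons h.symm (p.mapLe (G.deleteEdges_le _)), ?_, by simp⟩
    rw [Walk.cons_isHamiltonianCycle_iff]
    refine ⟨by simpa [Walk.IsHamiltonian] using hp, fun he ↦ ?_⟩
    have he' := p.edges_subset_edgeSet (by simpa using he)
    rw [edgeSet_deleteEdges] at he'
    exact he'.2 Sym2.eq_swap

end SimpleGraph

namespace ExtGraph

open SimpleGraph

variable {V : Type*} {G : SimpleGraph V} {s t : V}

lemma adj_inl_inl {u v : V} :
    (ExtGraph G s t).Adj (.inl u) (.inl v) ↔ (G.deleteEdges {s(s, t)}).Adj u v := by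
  simp only [ExtGraph, fromRel_adj, deleteEdges_adj]
  grind [G.adj_comm, G.ne_of_adj]

lemma adj_inr_zero {x : V ⊕ Fin 2} : (ExtGraph G s t).Adj (.inr 0) x ↔ x = .inl s := by
  simp +contextual [ExtGraph]

lemma adj_inr_one {x : V ⊕ Fin 2} : (ExtGraph G s t).Adj x (.inr 1) ↔ x = .inl t := by
  simp +contextual [ExtGraph]

def inlEmbedding : G.deleteEdges {s(s, t)} ↪g ExtGraph G s t where
  toEmbedding := .inl
  map_rel_iff' := adj_inl_inl

def extendWalk (q : (G.deleteEdges {s(s, t)}).Walk s t) :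
    (ExtGraph G s t).Walk (.inr 0) (.inr 1) :=
  .cons (adj_inr_zero.2 rfl : (ExtGraph G s t).Adj (.inr 0) (inlEmbedding.toHom s))
    ((q.map inlEmbedding.toHom).concat
      (adj_inr_one.2 rfl : (ExtGraph G s t).Adj (inlEmbedding.toHom t) (.inr 1)))

lemma support_extendWalk (q : (G.deleteEdges {s(s, t)}).Walk s t) :
    (extendWalk q).support = .inr 0 :: (q.support.map .inl ++ [.inr 1]) := by
  rw [extendWalk, Walk.support_cons, Walk.support_concat, Walk.support_map]
  rfl

variable [DecidableEq V]

lemma isHamiltonian_iff_of_support_eq {K : SimpleGraph (V ⊕ Fin 2)} {H : SimpleGraph V}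
    {a b : V ⊕ Fin 2} {c d : V} {p : K.Walk a b} {q : H.Walk c d}
    (h : p.support = .inr 0 :: (q.support.map .inl ++ [.inr 1])) :
    p.IsHamiltonian ↔ q.IsHamiltonian := by
  simp only [Walk.IsHamiltonian, h]
  refine ⟨fun hp v ↦ ?_, ?_⟩
  · simpa [List.count_cons, List.count_map_of_injective _ _ Sum.inl_injective] using hp (.inl v)
  · rintro hq (v | i)
    · simpa [List.count_cons, List.count_map_of_injective _ _ Sum.inl_injective] using hq v
    · fin_cases i <;> simp [List.count_eq_zero]

lemma exists_deleteEdges_isHamiltonian_of_isHamiltonian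
    {p : (ExtGraph G s t).Walk (.inr 0) (.inr 1)} (hp : p.IsHamiltonian) :
    ∃ q : (G.deleteEdges {s(s, t)}).Walk s t, q.IsHamiltonian := by
  obtain ⟨x, h, p, rfl⟩ := Walk.exists_eq_cons_of_ne (by simp) p
  obtain rfl := adj_inr_zero.1 h
  have hp_ne : ¬p.Nil := Walk.not_nil_of_ne (by simp)
  have hsupp : (Walk.cons h p).support = .inr 0 :: (p.dropLast.support ++ [.inr 1]) := by
    rw [Walk.support_cons, Walk.support_dropLast_concat hp_ne]
  have hrange : ∀ z ∈ p.dropLast.support, z ∈ Set.range Sum.inl := by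
    have hnd := hp.isPath.support_nodup
    rw [hsupp, List.nodup_cons, List.nodup_append] at hnd
    rintro (z | i) hz
    · exact ⟨z, rfl⟩
    · fin_cases i
      · exact absurd (List.mem_append_left _ hz) hnd.1
      · exact absurd rfl (hnd.2.2.2 _ hz _ (List.mem_singleton_self _))
  obtain ⟨q, hq⟩ := Walk.exists_support_map_eq_of_mem_range inlEmbedding p.dropLast rfl
    (adj_inr_one.1 (p.adj_penultimate hp_ne)).symm hrange
  exact ⟨q, (isHamiltonian_iff_of_support_eq (hsupp.trans (by rw [← hq]; rfl))).1 hp⟩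

theorem exists_isHamiltonian_iff :
    (∃ p : (ExtGraph G s t).Walk (.inr 0) (.inr 1), p.IsHamiltonian) ↔
      ∃ q : (G.deleteEdges {s(s, t)}).Walk s t, q.IsHamiltonian :=
  ⟨fun ⟨_, hp⟩ ↦ exists_deleteEdges_isHamiltonian_of_isHamiltonian hp,
    fun ⟨q, hq⟩ ↦
      ⟨extendWalk q, (isHamiltonian_iff_of_support_eq (support_extendWalk q)).2 hq⟩⟩

end ExtGraph

theorem stmt_13_general {V : Type*} [DecidableEq V] (G : SimpleGraph V)
    (s t : V) (hst : G.Adj s t) :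
    (∃ (v : V) (c : G.Walk v v), c.IsHamiltonianCycle ∧ s(s, t) ∈ c.edges) ↔
    ∃ p : (ExtGraph G s t).Walk (Sum.inr 0) (Sum.inr 1), p.IsHamiltonian :=
  (SimpleGraph.exists_isHamiltonianCycle_mem_edges_iff hst).trans
    ExtGraph.exists_isHamiltonian_iff.symm

/-- Let `G` be a finite simple graph with at least three vertices and let `{s, t}` be an
edge of `G`. Then `G` has a Hamiltonian cycle containing the edge `{s, t}` if and only
if the modified graph `G'` has a Hamiltonian path from `s'` to `t'`. -/
theorem stmt_13 {V : Type*} [Fintype V] [DecidableEq V] (G : SimpleGraph V)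
    (hV : 3 ≤ Fintype.card V) (s t : V) (hst : G.Adj s t) :
    (∃ (v : V) (c : G.Walk v v), c.IsHamiltonianCycle ∧ s(s, t) ∈ c.edges) ↔
    ∃ p : (ExtGraph G s t).Walk (Sum.inr 0) (Sum.inr 1), p.IsHamiltonian :=
  stmt_13_general G s t hst
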